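/- arXiv:cond-mat/0610881 — 3 statements merged into one kernel-verified Lean document; each statement's English description precedes it below -/
import Mathlib

section
/- If φ_ε is a classical solution of (1/2)φ'' + (f(q₀) − f(φ²))φ = εV(x)φ on ℝ with φ_ε(x) → ±√q₀ and φ_ε'(x) → 0 exponentially fast as x → ±∞, and V is C¹ with exponential decay |V(x)| ≤ Ce^{−κ|x|}, then for every ε ≠ 0 the integral ∫_ℝ V'(x)(q₀ − φ_ε²(x)) dx equals 0. -/
open MeasureTheory Filter Set

/-- Necessary condition for a kink mode: `∫ V'(x)(q₀ − φ_ε²(x)) dx = 0` for `ε ≠ 0`. -/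
theorem stmt4 (q₀ ε : ℝ) (hq₀ : 0 < q₀) (hε : ε ≠ 0)
    (f V φ : ℝ → ℝ) (hf : ContDiff ℝ 1 f) (hV : ContDiff ℝ 1 V)
    (C κ : ℝ) (hC : 0 < C) (hκ : 0 < κ)
    (hVdecay : ∀ x, |V x| ≤ C * Real.exp (-κ * |x|))
    (hφ : ContDiff ℝ 2 φ)
    (hODE : ∀ x, (1 / 2) * deriv (deriv φ) x + (f q₀ - f (φ x ^ 2)) * φ x
      = ε * V x * φ x)
    (A a : ℝ) (hA : 0 < A) (ha : 0 < a)
    (hdecayp : ∀ x ≥ (0 : ℝ), |φ x - Real.sqrt q₀| ≤ A * Real.exp (-a * x)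
      ∧ |deriv φ x| ≤ A * Real.exp (-a * x))
    (hdecaym : ∀ x ≤ (0 : ℝ), |φ x + Real.sqrt q₀| ≤ A * Real.exp (a * x)
      ∧ |deriv φ x| ≤ A * Real.exp (a * x))
    (hint : MeasureTheory.Integrable (fun x => deriv V x * (q₀ - φ x ^ 2))) :
    ∫ x, deriv V x * (q₀ - φ x ^ 2) = 0 := by
  -- the integrand
  set g : ℝ → ℝ := fun x => deriv V x * (q₀ - φ x ^ 2) with hg
  -- primitive of f q₀ - f s
  set W : ℝ → ℝ := fun q => ∫ s in q₀..q, (f q₀ - f s) with hW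
  have hfc : Continuous fun s => f q₀ - f s := continuous_const.sub (hf.continuous)
  have hWderiv : ∀ q : ℝ, HasDerivAt W (f q₀ - f q) q := fun q =>
    (hfc.integral_hasStrictDerivAt q₀ q).hasDerivAt
  -- φ' is C¹
  have hφ' : ContDiff ℝ 1 (deriv φ) := by
    have := (contDiff_succ_iff_deriv (n := 1)).mp hφ
    exact this.2.2
  have hφd : ∀ x : ℝ, HasDerivAt φ (deriv φ x) x :=
    fun x => (hφ.differentiable (by norm_num) x).hasDerivAt
  have hφ'd : ∀ x : ℝ, HasDerivAt (deriv φ) (deriv (deriv φ) x) x :=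
    fun x => (hφ'.differentiable (by norm_num) x).hasDerivAt
  have hVd : ∀ x : ℝ, HasDerivAt V (deriv V x) x :=
    fun x => (hV.differentiable (by norm_num) x).hasDerivAt
  -- the energy
  set E : ℝ → ℝ := fun x =>
    (1 / 2) * (deriv φ x) ^ 2 + W (φ x ^ 2) + ε * V x * (q₀ - φ x ^ 2) with hE
  -- derivative of φ²
  have hsq : ∀ x : ℝ, HasDerivAt (fun x => φ x ^ 2) (2 * φ x * deriv φ x) x := by
    intro x
    have := (hφd x).fun_pow 2
    simpa [mul_comm, mul_assoc, mul_left_comm] using this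
  have hEderiv : ∀ x : ℝ, HasDerivAt E (ε * g x) x := by
    intro x
    have h1 : HasDerivAt (fun x => (1 / 2) * (deriv φ x) ^ 2)
        ((1 / 2) * (2 * deriv φ x * deriv (deriv φ) x)) x := by
      have := ((hφ'd x).fun_pow 2).const_mul (1 / 2 : ℝ)
      simpa [mul_comm, mul_assoc, mul_left_comm] using this
    have h2 : HasDerivAt (fun x => W (φ x ^ 2))
        ((f q₀ - f (φ x ^ 2)) * (2 * φ x * deriv φ x)) x :=
      by have := (hWderiv (φ x ^ 2)).comp x (hsq x); exact this
    have h3 : HasDerivAt (fun x => ε * V x * (q₀ - φ x ^ 2))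
        (ε * deriv V x * (q₀ - φ x ^ 2) + ε * V x * (0 - 2 * φ x * deriv φ x)) x := by
      have hq : HasDerivAt (fun x => q₀ - φ x ^ 2) (0 - 2 * φ x * deriv φ x) x :=
        (hasDerivAt_const x q₀).sub (hsq x)
      have hv : HasDerivAt (fun x => ε * V x) (ε * deriv V x) x := (hVd x).const_mul ε
      exact hv.mul hq
    have htot := (h1.add h2).add h3
    have hode := hODE x
    have : (1 / 2) * (2 * deriv φ x * deriv (deriv φ) x)
        + (f q₀ - f (φ x ^ 2)) * (2 * φ x * deriv φ x)
        + (ε * deriv V x * (q₀ - φ x ^ 2) + ε * V x * (0 - 2 * φ x * deriv φ x))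
        = ε * g x := by
      simp only [hg]
      linear_combination (2 * deriv φ x) * hode
    rwa [this] at htot
  -- limits of φ and deriv φ at ±∞
  have hexp_top : Tendsto (fun x : ℝ => A * Real.exp (-a * x)) atTop (nhds 0) := by
    have : Tendsto (fun x : ℝ => Real.exp (-a * x)) atTop (nhds 0) := by
      apply Real.tendsto_exp_atBot.comp
      exact (tendsto_const_mul_atBot_of_neg (by linarith)).mpr tendsto_id
    simpa using this.const_mul A
  have hexp_bot : Tendsto (fun x : ℝ => A * Real.exp (a * x)) atBot (nhds 0) := by
    have : Tendsto (fun x : ℝ => Real.exp (a * x)) atBot (nhds 0) := by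
      apply Real.tendsto_exp_atBot.comp
      exact (tendsto_const_mul_atBot_of_pos ha).mpr tendsto_id
    simpa using this.const_mul A
  have hφtop : Tendsto φ atTop (nhds (Real.sqrt q₀)) := by
    rw [tendsto_iff_dist_tendsto_zero]
    apply squeeze_zero_norm' _ hexp_top
    filter_upwards [eventually_ge_atTop (0 : ℝ)] with x hx
    simpa [Real.dist_eq] using (hdecayp x hx).1
  have hφbot : Tendsto φ atBot (nhds (-Real.sqrt q₀)) := by
    rw [tendsto_iff_dist_tendsto_zero]
    apply squeeze_zero_norm' _ hexp_bot
    filter_upwards [eventually_le_atBot (0 : ℝ)] with x hx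
    have := (hdecaym x hx).1
    simpa [Real.dist_eq, sub_neg_eq_add] using this
  have hφ'top : Tendsto (deriv φ) atTop (nhds 0) := by
    apply squeeze_zero_norm' _ hexp_top
    filter_upwards [eventually_ge_atTop (0 : ℝ)] with x hx
    simpa using (hdecayp x hx).2
  have hφ'bot : Tendsto (deriv φ) atBot (nhds 0) := by
    apply squeeze_zero_norm' _ hexp_bot
    filter_upwards [eventually_le_atBot (0 : ℝ)] with x hx
    simpa using (hdecaym x hx).2
  -- φ² → q₀ at both ends
  have hsq_top : Tendsto (fun x => φ x ^ 2) atTop (nhds q₀) := by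
    have := (hφtop.mul hφtop)
    rw [← Real.mul_self_sqrt hq₀.le]
    simpa [pow_two] using this
  have hsq_bot : Tendsto (fun x => φ x ^ 2) atBot (nhds q₀) := by
    have := (hφbot.mul hφbot)
    have h2 : -Real.sqrt q₀ * -Real.sqrt q₀ = q₀ := by
      rw [neg_mul_neg, Real.mul_self_sqrt hq₀.le]
    rw [← h2]
    simpa [pow_two] using this
  -- W is continuous
  have hWcont : Continuous W := by
    have : Differentiable ℝ W := fun q => (hWderiv q).differentiableAt
    exact this.continuous
  have hWq₀ : W q₀ = 0 := by simp [hW]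
  -- V bounded
  have hVbdd : ∀ x : ℝ, |V x| ≤ C := by
    intro x
    refine (hVdecay x).trans ?_
    have : Real.exp (-κ * |x|) ≤ 1 := by
      rw [Real.exp_le_one_iff]
      have : 0 ≤ κ * |x| := mul_nonneg hκ.le (abs_nonneg x)
      linarith
    nlinarith
  -- E → 0 at ±∞
  have hterm3 : ∀ l : Filter ℝ, Tendsto (fun x => φ x ^ 2) l (nhds q₀) →
      Tendsto (fun x => ε * V x * (q₀ - φ x ^ 2)) l (nhds 0) := by
    intro l hl
    have h0 : Tendsto (fun x => q₀ - φ x ^ 2) l (nhds 0) := by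
      simpa using (tendsto_const_nhds (x := q₀)).sub hl
    apply squeeze_zero_norm' _ (by simpa using h0.abs.const_mul (|ε| * C))
    filter_upwards with x
    have h1 : |ε * V x * (q₀ - φ x ^ 2)| = |ε| * |V x| * |q₀ - φ x ^ 2| := by
      rw [abs_mul, abs_mul]
    rw [Real.norm_eq_abs, h1]
    have := hVbdd x
    have hab : (0:ℝ) ≤ |q₀ - φ x ^ 2| := abs_nonneg _
    have hae : (0:ℝ) ≤ |ε| := abs_nonneg _
    apply mul_le_mul_of_nonneg_right _ hab
    exact mul_le_mul_of_nonneg_left this hae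
  have hEtop : Tendsto E atTop (nhds 0) := by
    have h1 : Tendsto (fun x => (1 / 2) * (deriv φ x) ^ 2) atTop (nhds 0) := by
      simpa using ((hφ'top.mul hφ'top).const_mul (1 / 2 : ℝ)).congr
        (fun x => by ring)
    have h2 : Tendsto (fun x => W (φ x ^ 2)) atTop (nhds 0) := by
      rw [← hWq₀]
      exact (hWcont.tendsto q₀).comp hsq_top
    have h3 := hterm3 atTop hsq_top
    simpa [hE] using (h1.add h2).add h3
  have hEbot : Tendsto E atBot (nhds 0) := by
    have h1 : Tendsto (fun x => (1 / 2) * (deriv φ x) ^ 2) atBot (nhds 0) := by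
      simpa using ((hφ'bot.mul hφ'bot).const_mul (1 / 2 : ℝ)).congr
        (fun x => by ring)
    have h2 : Tendsto (fun x => W (φ x ^ 2)) atBot (nhds 0) := by
      rw [← hWq₀]
      exact (hWcont.tendsto q₀).comp hsq_bot
    have h3 := hterm3 atBot hsq_bot
    simpa [hE] using (h1.add h2).add h3
  -- integrability of ε * g
  have hint' : Integrable (fun x => ε * g x) := hint.const_mul ε
  -- FTC on both halves
  have hIoi : ∫ x in Ioi (0:ℝ), ε * g x = 0 - E 0 := by
    apply integral_Ioi_of_hasDerivAt_of_tendsto' (fun x _ => hEderiv x)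
      hint'.integrableOn hEtop
  have hIic : ∫ x in Iic (0:ℝ), ε * g x = E 0 - 0 := by
    apply integral_Iic_of_hasDerivAt_of_tendsto' (fun x _ => hEderiv x)
      hint'.integrableOn hEbot
  have hsplit : (∫ x in Iic (0:ℝ), ε * g x) + ∫ x in Ioi (0:ℝ), ε * g x
      = ∫ x, ε * g x :=
    intervalIntegral.integral_Iic_add_Ioi hint'.integrableOn hint'.integrableOn
  have htotal : ∫ x, ε * g x = 0 := by
    rw [← hsplit, hIoi, hIic]; ring
  rw [integral_const_mul] at htotal
  rcases mul_eq_zero.mp htotal with h | h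
  · exact absurd h hε
  · exact h
end

section
/- L''(0) = ∫₀^∞ x²e^{−κx}(4sech²x − 6sech⁴x) dx satisfies L''(0) = −4κ^{−3} + O(κ^{−5}) as κ → ∞; in particular there exists κ₊ such that L''(0) < 0 for all κ > κ₊. -/
open Filter Asymptotics MeasureTheory Set

private lemma sinh_le_mul_cosh {x : ℝ} (hx : 0 ≤ x) : Real.sinh x ≤ x * Real.cosh x := by
  have key : ∀ y : ℝ, HasDerivAt (fun y => y * Real.cosh y - Real.sinh y)
      (y * Real.sinh y) y := by
    intro y
    have h1 := (hasDerivAt_id y).mul (Real.hasDerivAt_cosh y)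
    have h2 := h1.sub (Real.hasDerivAt_sinh y)
    refine h2.congr_deriv ?_
    simp [id_eq]
  have hmono : MonotoneOn (fun y => y * Real.cosh y - Real.sinh y) (Ici (0:ℝ)) := by
    apply monotoneOn_of_deriv_nonneg (convex_Ici 0)
      (Continuous.continuousOn (by continuity))
    · intro y hy
      exact (key y).differentiableAt.differentiableWithinAt
    · intro y hy
      rw [interior_Ici] at hy
      rw [(key y).deriv]
      exact mul_nonneg (le_of_lt hy) (Real.sinh_nonneg_iff.mpr (le_of_lt hy))
  have h0 := hmono (self_mem_Ici) hx hx
  simp only [Real.cosh_zero, Real.sinh_zero, mul_one, zero_mul, sub_zero] at h0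
  linarith

private lemma pointwise_bound {x : ℝ} (hx : 0 ≤ x) :
    0 ≤ 4 * (Real.cosh x)⁻¹ ^ 2 - 6 * (Real.cosh x)⁻¹ ^ 4 + 2 ∧
    4 * (Real.cosh x)⁻¹ ^ 2 - 6 * (Real.cosh x)⁻¹ ^ 4 + 2 ≤ 8 * x ^ 2 := by
  set c := Real.cosh x with hc
  have hc1 : 1 ≤ c := Real.one_le_cosh x
  have hc0 : (0:ℝ) < c := lt_of_lt_of_le one_pos hc1
  have hid : 4 * c⁻¹ ^ 2 - 6 * c⁻¹ ^ 4 + 2 = 2 * (c^2 - 1) * (c^2 + 3) / c^4 := by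
    field_simp
    ring
  have hsq : c ^ 2 - 1 = Real.sinh x ^ 2 := by
    have := Real.cosh_sq_sub_sinh_sq x
    linarith
  have hs : Real.sinh x ≤ x * c := sinh_le_mul_cosh hx
  have hs0 : 0 ≤ Real.sinh x := Real.sinh_nonneg_iff.mpr hx
  have hsinh_sq : Real.sinh x ^ 2 ≤ x ^ 2 * c ^ 2 := by
    have := mul_le_mul hs hs hs0 (mul_nonneg hx hc0.le)
    nlinarith
  constructor
  · rw [hid]
    apply div_nonneg _ (by positivity)
    have : 0 ≤ c ^ 2 - 1 := by nlinarith
    nlinarith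
  · rw [hid]
    rw [div_le_iff₀ (by positivity)]
    have h3 : c ^ 2 + 3 ≤ 4 * c ^ 2 := by nlinarith
    have h4 : c ^ 2 - 1 ≤ x ^ 2 * c ^ 2 := by rw [hsq]; exact hsinh_sq
    nlinarith [sq_nonneg c, sq_nonneg x, mul_nonneg (sq_nonneg x) (sq_nonneg c)]

private lemma integrable_pow_exp (n : ℕ) {κ : ℝ} (hκ : 0 < κ) :
    IntegrableOn (fun x : ℝ => x ^ n * Real.exp (-κ * x)) (Ioi 0) := by
  have h := integrableOn_rpow_mul_exp_neg_mul_rpow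
    (lt_of_lt_of_le neg_one_lt_zero (Nat.cast_nonneg n)) one_pos hκ
  apply h.congr_fun _ measurableSet_Ioi
  intro x hx
  simp [Real.rpow_natCast, Real.rpow_one]

private lemma integral_pow_exp (n : ℕ) {κ : ℝ} (hκ : 0 < κ) :
    ∫ x in Ioi (0:ℝ), x ^ n * Real.exp (-κ * x) = (n.factorial : ℝ) / κ ^ (n + 1) := by
  have h := Real.integral_rpow_mul_exp_neg_mul_Ioi
    (show (0:ℝ) < n + 1 by positivity) hκ
  rw [show ((n:ℝ) + 1) - 1 = (n:ℝ) by ring] at h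
  have heq : ∫ x in Ioi (0:ℝ), x ^ n * Real.exp (-κ * x)
      = ∫ t in Ioi (0:ℝ), t ^ (n:ℝ) * Real.exp (-(κ * t)) := by
    apply setIntegral_congr_fun measurableSet_Ioi
    intro x _
    simp [Real.rpow_natCast, neg_mul]
  rw [heq, h, Real.Gamma_nat_eq_factorial,
    show ((n:ℝ) + 1) = ((n + 1 : ℕ) : ℝ) by push_cast; ring, Real.rpow_natCast,
    div_pow, one_pow]
  ring

/-- Laplace asymptotics: `L''(0) = −4κ^{−3} + O(κ^{−5})` as `κ → ∞`; in particular
`L''(0) < 0` for all large `κ`. -/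
theorem stmt12 (G : ℝ → ℝ)
    (hG : ∀ κ : ℝ, G κ = ∫ x in Set.Ioi (0 : ℝ), x ^ 2 * Real.exp (-κ * x)
      * (4 * (Real.cosh x)⁻¹ ^ 2 - 6 * (Real.cosh x)⁻¹ ^ 4)) :
    ((fun κ => G κ + 4 / κ ^ 3) =O[atTop] fun κ : ℝ => 1 / κ ^ 5)
    ∧ ∃ K : ℝ, ∀ κ > K, G κ < 0 := by
  -- Main estimate: for κ > 0, 0 ≤ G κ + 4/κ³ ≤ 192/κ⁵
  have key : ∀ κ : ℝ, 0 < κ → 0 ≤ G κ + 4 / κ ^ 3 ∧ G κ + 4 / κ ^ 3 ≤ 192 / κ ^ 5 := by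
    intro κ hκ
    have hκ0 : κ ≠ 0 := ne_of_gt hκ
    have hint2 : IntegrableOn (fun x : ℝ => x ^ 2 * Real.exp (-κ * x)) (Ioi 0) :=
      integrable_pow_exp 2 hκ
    have hint4 : IntegrableOn (fun x : ℝ => x ^ 4 * Real.exp (-κ * x)) (Ioi 0) :=
      integrable_pow_exp 4 hκ
    -- integrability of the full integrand
    have hcont : Continuous (fun x : ℝ => x ^ 2 * Real.exp (-κ * x)
        * (4 * (Real.cosh x)⁻¹ ^ 2 - 6 * (Real.cosh x)⁻¹ ^ 4)) := by
      have hc : Continuous fun x : ℝ => (Real.cosh x)⁻¹ :=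
        Real.continuous_cosh.inv₀ fun x => (Real.cosh_pos x).ne'
      have he : Continuous fun x : ℝ => Real.exp (-κ * x) :=
        Real.continuous_exp.comp (continuous_const.mul continuous_id)
      exact ((continuous_pow 2).mul he).mul
        ((continuous_const.mul (hc.pow 2)).sub (continuous_const.mul (hc.pow 4)))
    have hintG : IntegrableOn (fun x : ℝ => x ^ 2 * Real.exp (-κ * x)
        * (4 * (Real.cosh x)⁻¹ ^ 2 - 6 * (Real.cosh x)⁻¹ ^ 4)) (Ioi 0) := by
      apply Integrable.mono' (hint2.const_mul 10) hcont.aestronglyMeasurable.restrict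
      apply ae_of_all
      intro x
      have h1 : (0:ℝ) < Real.cosh x := Real.cosh_pos x
      have h2 : (Real.cosh x)⁻¹ ≤ 1 := by
        rw [inv_le_one_iff₀]; right; exact Real.one_le_cosh x
      have h3 : (0:ℝ) ≤ (Real.cosh x)⁻¹ := by positivity
      have hb : |4 * (Real.cosh x)⁻¹ ^ 2 - 6 * (Real.cosh x)⁻¹ ^ 4| ≤ 10 := by
        rw [abs_le]
        constructor <;> nlinarith [pow_le_one₀ h3 h2 (n := 2), pow_le_one₀ h3 h2 (n := 4),
          pow_nonneg h3 2, pow_nonneg h3 4]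
      rw [norm_mul, Real.norm_eq_abs, Real.norm_eq_abs]
      have he : (0:ℝ) ≤ x ^ 2 * Real.exp (-κ * x) := by positivity
      rw [abs_of_nonneg he]
      calc x ^ 2 * Real.exp (-κ * x) * |4 * (Real.cosh x)⁻¹ ^ 2 - 6 * (Real.cosh x)⁻¹ ^ 4|
          ≤ x ^ 2 * Real.exp (-κ * x) * 10 := by
            exact mul_le_mul_of_nonneg_left hb he
        _ = 10 * (x ^ 2 * Real.exp (-κ * x)) := by ring
    -- G κ + 4/κ³ = ∫ x²e^{-κx}(f x + 2)
    have hval2 : ∫ x in Ioi (0:ℝ), x ^ 2 * Real.exp (-κ * x) = 2 / κ ^ 3 := by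
      rw [integral_pow_exp 2 hκ]; norm_num [Nat.factorial]
    have hval4 : ∫ x in Ioi (0:ℝ), x ^ 4 * Real.exp (-κ * x) = 24 / κ ^ 5 := by
      rw [integral_pow_exp 4 hκ]; norm_num [Nat.factorial]
    have hsum : G κ + 4 / κ ^ 3 = ∫ x in Ioi (0:ℝ), x ^ 2 * Real.exp (-κ * x)
        * (4 * (Real.cosh x)⁻¹ ^ 2 - 6 * (Real.cosh x)⁻¹ ^ 4 + 2) := by
      have : (fun x : ℝ => x ^ 2 * Real.exp (-κ * x)
          * (4 * (Real.cosh x)⁻¹ ^ 2 - 6 * (Real.cosh x)⁻¹ ^ 4 + 2))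
          = fun x : ℝ => x ^ 2 * Real.exp (-κ * x)
          * (4 * (Real.cosh x)⁻¹ ^ 2 - 6 * (Real.cosh x)⁻¹ ^ 4)
          + 2 * (x ^ 2 * Real.exp (-κ * x)) := by
        funext x; ring
      rw [this, integral_add hintG (hint2.const_mul 2), integral_const_mul, hval2, hG κ]
      ring
    have hintS : IntegrableOn (fun x : ℝ => x ^ 2 * Real.exp (-κ * x)
        * (4 * (Real.cosh x)⁻¹ ^ 2 - 6 * (Real.cosh x)⁻¹ ^ 4 + 2)) (Ioi 0) := by
      have : (fun x : ℝ => x ^ 2 * Real.exp (-κ * x)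
          * (4 * (Real.cosh x)⁻¹ ^ 2 - 6 * (Real.cosh x)⁻¹ ^ 4 + 2))
          = fun x : ℝ => x ^ 2 * Real.exp (-κ * x)
          * (4 * (Real.cosh x)⁻¹ ^ 2 - 6 * (Real.cosh x)⁻¹ ^ 4)
          + 2 * (x ^ 2 * Real.exp (-κ * x)) := by
        funext x; ring
      rw [this]
      exact hintG.add (hint2.const_mul 2)
    constructor
    · rw [hsum]
      apply setIntegral_nonneg measurableSet_Ioi
      intro x hx
      have := (pointwise_bound (le_of_lt hx)).1
      positivity
    · rw [hsum]
      have hle : ∫ x in Ioi (0:ℝ), x ^ 2 * Real.exp (-κ * x)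
          * (4 * (Real.cosh x)⁻¹ ^ 2 - 6 * (Real.cosh x)⁻¹ ^ 4 + 2)
          ≤ ∫ x in Ioi (0:ℝ), 8 * (x ^ 4 * Real.exp (-κ * x)) := by
        apply setIntegral_mono_on hintS (hint4.const_mul 8) measurableSet_Ioi
        intro x hx
        have hb := (pointwise_bound (le_of_lt hx)).2
        have he : (0:ℝ) ≤ x ^ 2 * Real.exp (-κ * x) := by positivity
        calc x ^ 2 * Real.exp (-κ * x)
            * (4 * (Real.cosh x)⁻¹ ^ 2 - 6 * (Real.cosh x)⁻¹ ^ 4 + 2)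
            ≤ x ^ 2 * Real.exp (-κ * x) * (8 * x ^ 2) := mul_le_mul_of_nonneg_left hb he
          _ = 8 * (x ^ 4 * Real.exp (-κ * x)) := by ring
      rw [integral_const_mul, hval4] at hle
      calc (∫ x in Ioi (0:ℝ), x ^ 2 * Real.exp (-κ * x)
          * (4 * (Real.cosh x)⁻¹ ^ 2 - 6 * (Real.cosh x)⁻¹ ^ 4 + 2))
          ≤ 8 * (24 / κ ^ 5) := hle
        _ = 192 / κ ^ 5 := by ring
  constructor
  · rw [isBigO_iff]
    refine ⟨192, ?_⟩
    filter_upwards [eventually_gt_atTop (0:ℝ)] with κ hκ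
    obtain ⟨h1, h2⟩ := key κ hκ
    rw [Real.norm_eq_abs, Real.norm_eq_abs, abs_of_nonneg h1,
      abs_of_nonneg (by positivity : (0:ℝ) ≤ 1 / κ ^ 5)]
    calc G κ + 4 / κ ^ 3 ≤ 192 / κ ^ 5 := h2
      _ = 192 * (1 / κ ^ 5) := by ring
  · refine ⟨7, fun κ hκ => ?_⟩
    have hκ0 : (0:ℝ) < κ := by linarith
    obtain ⟨h1, h2⟩ := key κ hκ0
    have h3 : 192 / κ ^ 5 < 4 / κ ^ 3 := by
      rw [div_lt_div_iff₀ (by positivity) (by positivity)]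
      have h49 : (49:ℝ) < κ ^ 2 := by nlinarith
      nlinarith [mul_lt_mul_of_pos_left h49 (show (0:ℝ) < 4 * κ ^ 3 by positivity)]
    linarith
end

section
/- For the cubic NLS, the explicit functions u₊(x) = −(2/(2+κ₊))e^{κ₊x}(sech²x + κ₊tanh x − κ₊²/2) and w₊(x) = −(κ₋/(2+κ₊))e^{κ₊x}(κ₊ − 2tanh x), with λ = κ₊κ₋/2 and κ₊² + κ₋² = 4, satisfy the linearized spectral system L₊u = −λw, L₋w = λu, where L₊ = −(1/2)∂ₓ² + 3tanh²x − 1 and L₋ = −(1/2)∂ₓ² + tanh²x − 1. -/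
lemma real_tanh_hasDerivAt (x : ℝ) :
    HasDerivAt Real.tanh (1 - Real.tanh x ^ 2) x := by
  have hc : Real.cosh x ≠ 0 := (Real.cosh_pos x).ne'
  have h := (Real.hasDerivAt_sinh x).div (Real.hasDerivAt_cosh x) hc
  have hfun : (fun y => Real.sinh y / Real.cosh y) = Real.tanh := by
    funext y; rw [Real.tanh_eq_sinh_div_cosh]
  rw [show (Real.sinh / Real.cosh) = Real.tanh from hfun] at h
  refine h.congr_deriv ?_
  rw [Real.tanh_eq_sinh_div_cosh]
  have h1 : Real.cosh x ^ 2 - Real.sinh x ^ 2 = 1 := Real.cosh_sq_sub_sinh_sq x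
  field_simp

lemma sech_sq_eq (x : ℝ) : (Real.cosh x)⁻¹ ^ 2 = 1 - Real.tanh x ^ 2 := by
  have hc : Real.cosh x ≠ 0 := (Real.cosh_pos x).ne'
  have h1 : Real.cosh x ^ 2 - Real.sinh x ^ 2 = 1 := Real.cosh_sq_sub_sinh_sq x
  rw [Real.tanh_eq_sinh_div_cosh]
  field_simp
  linarith [h1]

lemma tanhC_hasDerivAt (x : ℝ) :
    HasDerivAt (fun y : ℝ => ((Real.tanh y : ℝ) : ℂ))
      (1 - ((Real.tanh x : ℝ) : ℂ) ^ 2) x := by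
  have h := (real_tanh_hasDerivAt x).ofReal_comp (z := x)
  convert h using 1
  push_cast
  ring

lemma expC_hasDerivAt (κ : ℂ) (x : ℝ) :
    HasDerivAt (fun y : ℝ => Complex.exp (κ * (y : ℂ)))
      (κ * Complex.exp (κ * (x : ℂ))) x := by
  have hid : HasDerivAt (fun y : ℝ => ((y : ℝ) : ℂ)) 1 x := by
    simpa using (hasDerivAt_id x).ofReal_comp
  have := (hid.const_mul κ).cexp
  convert this using 1
  ring

lemma quartic_hasDerivAt (a b c d e : ℂ) (z : ℂ) :
    HasDerivAt (fun z : ℂ => a + b * z + c * z ^ 2 + d * z ^ 3 + e * z ^ 4)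
      (b + 2 * c * z + 3 * d * z ^ 2 + 4 * e * z ^ 3) z := by
  have h1 : HasDerivAt (fun z : ℂ => z) 1 z := hasDerivAt_id z
  have h2 := hasDerivAt_pow 2 z
  have h3 := hasDerivAt_pow 3 z
  have h4 := hasDerivAt_pow 4 z
  have := ((((hasDerivAt_const z a).add (h1.const_mul b)).add
    (h2.const_mul c)).add (h3.const_mul d)).add (h4.const_mul e)
  refine this.congr_deriv ?_
  push_cast
  ring

lemma key_deriv (c κ : ℂ) (P P' : ℂ → ℂ) (hP : ∀ z, HasDerivAt P (P' z) z) :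
    deriv (fun y : ℝ => c * (Complex.exp (κ * (y : ℂ)) * P ((Real.tanh y : ℝ) : ℂ)))
      = fun x : ℝ => c * (Complex.exp (κ * (x : ℂ)) *
          (κ * P ((Real.tanh x : ℝ) : ℂ)
            + (1 - ((Real.tanh x : ℝ) : ℂ) ^ 2) * P' ((Real.tanh x : ℝ) : ℂ))) := by
  funext x
  set T : ℂ := ((Real.tanh x : ℝ) : ℂ) with hT
  have h1 : HasDerivAt (fun s : ℝ => P ((s : ℝ) : ℂ)) (P' T) (Real.tanh x) :=
    HasDerivAt.comp_ofReal (hP T)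
  have h2 : HasDerivAt (fun y : ℝ => P ((Real.tanh y : ℝ) : ℂ))
      ((1 - Real.tanh x ^ 2) • P' T) x :=
    h1.scomp x (real_tanh_hasDerivAt x)
  have h3 := ((expC_hasDerivAt κ x).mul h2).const_mul c
  have : deriv (fun y : ℝ => c * (Complex.exp (κ * (y : ℂ)) * P ((Real.tanh y : ℝ) : ℂ))) x = _ := h3.deriv
  rw [this, Complex.real_smul, Complex.ofReal_sub, Complex.ofReal_one, Complex.ofReal_pow,
    ← hT]
  ring

/-- The explicit fundamental solutions `(u₊, w₊)` of the linearization of the cubic NLS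
around the kink `tanh` satisfy `L₊u = −λw`, `L₋w = λu`, where `L₊ = −(1/2)∂ₓ² + 3tanh²x − 1`
and `L₋ = −(1/2)∂ₓ² + tanh²x − 1`, with `λ = κ₊κ₋/2` and `κ₊² + κ₋² = 4`. -/
theorem stmt14 (κp κm lam : ℂ) (hk : κp ^ 2 + κm ^ 2 = 4) (hk2 : κp ≠ -2)
    (hlam : lam = κp * κm / 2)
    (u w : ℝ → ℂ)
    (hu : ∀ x : ℝ, u x = -(2 / (2 + κp)) * Complex.exp (κp * (x : ℂ))
      * ((((Real.cosh x)⁻¹ ^ 2 : ℝ) : ℂ) + κp * ((Real.tanh x : ℝ) : ℂ) - κp ^ 2 / 2))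
    (hw : ∀ x : ℝ, w x = -(κm / (2 + κp)) * Complex.exp (κp * (x : ℂ))
      * (κp - 2 * ((Real.tanh x : ℝ) : ℂ))) :
    ∀ x : ℝ,
      (-(1 / 2) * deriv (deriv u) x
          + (3 * ((Real.tanh x : ℝ) : ℂ) ^ 2 - 1) * u x = -lam * w x)
      ∧ (-(1 / 2) * deriv (deriv w) x
          + (((Real.tanh x : ℝ) : ℂ) ^ 2 - 1) * w x = lam * u x) := by
  have h2k : (2 : ℂ) + κp ≠ 0 := by
    intro h; exact hk2 (by linear_combination h)
  have hkm : κm ^ 2 = 4 - κp ^ 2 := by linear_combination hk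
  set cu : ℂ := -(2 / (2 + κp)) with hcu
  set cw : ℂ := -(κm / (2 + κp)) with hcw
  -- polynomial coefficients (quartic form a + b z + c z² + d z³ + e z⁴)
  -- u: P0, P1, P2 ; w: Q0, Q1, Q2
  have hu' : u = fun y : ℝ => cu * (Complex.exp (κp * (y : ℂ)) *
      ((1 - κp ^ 2 / 2) + κp * ((Real.tanh y : ℝ) : ℂ)
        + (-1) * ((Real.tanh y : ℝ) : ℂ) ^ 2 + 0 * ((Real.tanh y : ℝ) : ℂ) ^ 3
        + 0 * ((Real.tanh y : ℝ) : ℂ) ^ 4)) := by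
    funext y
    rw [hu y]
    have : (((Real.cosh y)⁻¹ ^ 2 : ℝ) : ℂ) = 1 - ((Real.tanh y : ℝ) : ℂ) ^ 2 := by
      rw [sech_sq_eq y]; push_cast; ring
    rw [this]; ring
  have hw' : w = fun y : ℝ => cw * (Complex.exp (κp * (y : ℂ)) *
      (κp + (-2) * ((Real.tanh y : ℝ) : ℂ)
        + 0 * ((Real.tanh y : ℝ) : ℂ) ^ 2 + 0 * ((Real.tanh y : ℝ) : ℂ) ^ 3
        + 0 * ((Real.tanh y : ℝ) : ℂ) ^ 4)) := by
    funext y; rw [hw y]; ring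
  -- first derivatives
  have d1u : deriv u = fun y : ℝ => cu * (Complex.exp (κp * (y : ℂ)) *
      ((2 * κp - κp ^ 3 / 2) + (κp ^ 2 - 2) * ((Real.tanh y : ℝ) : ℂ)
        + (-(2 * κp)) * ((Real.tanh y : ℝ) : ℂ) ^ 2 + 2 * ((Real.tanh y : ℝ) : ℂ) ^ 3
        + 0 * ((Real.tanh y : ℝ) : ℂ) ^ 4)) := by
    rw [hu', key_deriv cu κp _ _ (quartic_hasDerivAt (1 - κp ^ 2 / 2) κp (-1) 0 0)]
    funext y; ring
  have d2u : deriv (deriv u) = fun y : ℝ => cu * (Complex.exp (κp * (y : ℂ)) *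
      ((-2 + 3 * κp ^ 2 - κp ^ 4 / 2) + (-(6 * κp) + κp ^ 3) * ((Real.tanh y : ℝ) : ℂ)
        + (8 - 3 * κp ^ 2) * ((Real.tanh y : ℝ) : ℂ) ^ 2
        + (6 * κp) * ((Real.tanh y : ℝ) : ℂ) ^ 3
        + (-6) * ((Real.tanh y : ℝ) : ℂ) ^ 4)) := by
    rw [d1u, key_deriv cu κp _ _
      (quartic_hasDerivAt (2 * κp - κp ^ 3 / 2) (κp ^ 2 - 2) (-(2 * κp)) 2 0)]
    funext y; ring
  have d1w : deriv w = fun y : ℝ => cw * (Complex.exp (κp * (y : ℂ)) *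
      ((-2 + κp ^ 2) + (-(2 * κp)) * ((Real.tanh y : ℝ) : ℂ)
        + 2 * ((Real.tanh y : ℝ) : ℂ) ^ 2 + 0 * ((Real.tanh y : ℝ) : ℂ) ^ 3
        + 0 * ((Real.tanh y : ℝ) : ℂ) ^ 4)) := by
    rw [hw', key_deriv cw κp _ _ (quartic_hasDerivAt κp (-2) 0 0 0)]
    funext y; ring
  have d2w : deriv (deriv w) = fun y : ℝ => cw * (Complex.exp (κp * (y : ℂ)) *
      ((-(4 * κp) + κp ^ 3) + (4 - 2 * κp ^ 2) * ((Real.tanh y : ℝ) : ℂ)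
        + (4 * κp) * ((Real.tanh y : ℝ) : ℂ) ^ 2 + (-4) * ((Real.tanh y : ℝ) : ℂ) ^ 3
        + 0 * ((Real.tanh y : ℝ) : ℂ) ^ 4)) := by
    rw [d1w, key_deriv cw κp _ _ (quartic_hasDerivAt (-2 + κp ^ 2) (-(2 * κp)) 2 0 0)]
    funext y; ring
  intro x
  set T : ℂ := ((Real.tanh x : ℝ) : ℂ) with hTdef
  set E : ℂ := Complex.exp (κp * (x : ℂ)) with hEdef
  have e2u := congrFun d2u x
  have e2w := congrFun d2w x
  have eu := congrFun hu' x
  have ew := congrFun hw' x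
  rw [← hTdef, ← hEdef] at e2u e2w eu ew
  constructor
  · rw [e2u, eu, ew, hlam, hcu, hcw]
    field_simp
    linear_combination (E * (2 * κp * T - κp ^ 2)) * hkm
  · rw [e2w, ew, eu, hlam, hcu, hcw]
    field_simp
    ring
end
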